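/- Conversely, for binary variables a^j with Σ_j a^j ≤ 1 and N satisfying N ≤ z_0 + Σ_j (z_j − z_{j−1}) a^j, the incurred cost Σ_j A_j a^j is at least the striking cost 𝒜(N), provided A_1 ≤ A_2 ≤ ... ≤ A_{na}. -/
import Mathlib


/-- Conversely, for binary variables covering `N`, the incurred cost
`∑ j, A j * a j` is at least the striking cost `𝒜 N`, provided the costs are
monotone non-decreasing. -/
theorem striking_binary_cost_lower_bound
    (na : ℕ) (z : Fin (na + 1) → ℝ) (A : Fin na → ℝ)
    (hz : StrictMono z) (hA0 : ∀ j, 0 ≤ A j)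
    (hAmono : Monotone A)
    (𝒜 : ℝ → ℝ)
    (hbase : ∀ N : ℝ, N ≤ z 0 → 𝒜 N = 0)
    (hstep : ∀ (j : Fin na) (N : ℝ), z j.castSucc < N → N ≤ z j.succ → 𝒜 N = A j)
    (a : Fin na → ℝ)
    (hbin : ∀ j, a j = 0 ∨ a j = 1)
    (hone : ∑ j, a j ≤ 1)
    (N : ℝ)
    (hcov : N ≤ z 0 + ∑ j, (z j.succ - z j.castSucc) * a j) :
    𝒜 N ≤ ∑ j, A j * a j := by
  have hanon : ∀ j, 0 ≤ a j := fun j => by rcases hbin j with h | h <;> simp [h]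
  by_cases h0 : N ≤ z 0
  · rw [hbase N h0]
    exact Finset.sum_nonneg fun j _ => mul_nonneg (hA0 j) (hanon j)
  push_neg at h0
  have hex : ∃ k, a k = 1 := by
    by_contra h
    push_neg at h
    have hz0 : ∀ j, a j = 0 := fun j => (hbin j).resolve_right (h j)
    simp [hz0] at hcov
    exact absurd hcov (not_le.mpr h0)
  obtain ⟨k, hk⟩ := hex
  have hzero : ∀ j, j ≠ k → a j = 0 := by
    intro j hj
    by_contra hja
    have hja1 : a j = 1 := (hbin j).resolve_left hja
    have h2 : (2:ℝ) ≤ ∑ i, a i := by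
      have hsub : ({j, k} : Finset (Fin na)) ⊆ Finset.univ := Finset.subset_univ _
      have := Finset.sum_le_sum_of_subset_of_nonneg hsub
        (fun i _ _ => hanon i)
      rw [Finset.sum_pair hj] at this
      linarith
    linarith
  have hsum : ∑ j, (z j.succ - z j.castSucc) * a j = z k.succ - z k.castSucc := by
    rw [Finset.sum_eq_single k]
    · rw [hk, mul_one]
    · intro i _ hi; rw [hzero i hi, mul_zero]
    · intro h; exact absurd (Finset.mem_univ k) h
  have hNk : N ≤ z k.succ := by
    have hz0k : z 0 ≤ z k.castSucc := hz.monotone (Fin.zero_le _)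
    rw [hsum] at hcov; linarith
  have hS : (Finset.univ.filter (fun i : Fin na => N ≤ z i.succ)).Nonempty :=
    ⟨k, by simp [hNk]⟩
  set S := Finset.univ.filter (fun i : Fin na => N ≤ z i.succ) with hSdef
  set j := S.min' hS with hjdef
  have hjmem : j ∈ S := Finset.min'_mem S hS
  have hjN : N ≤ z j.succ := by
    have := hjmem; rw [hSdef, Finset.mem_filter] at this; exact this.2
  have hjlt : z j.castSucc < N := by
    by_contra h
    push_neg at h
    have hj0 : j.val ≠ 0 := by
      intro hj0
      have hc : j.castSucc = 0 := by ext; simpa using hj0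
      rw [hc] at h
      linarith
    set j' : Fin na := ⟨j.val - 1, lt_of_le_of_lt (Nat.sub_le _ _) j.isLt⟩ with hj'def
    have hj'succ : j'.succ = j.castSucc := by
      ext
      simp [hj'def, Fin.val_succ]
      omega
    have hj'mem : j' ∈ S := by
      rw [hSdef, Finset.mem_filter]
      exact ⟨Finset.mem_univ _, by rw [hj'succ]; exact h⟩
    have := Finset.min'_le S j' hj'mem
    rw [← hjdef] at this
    have hj'lt : j' < j := by
      rw [Fin.lt_def]
      simp [hj'def]
      omega
    exact absurd this (not_le.mpr hj'lt)
  have hjk : j ≤ k := by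
    have : z j.castSucc < z k.succ := lt_of_lt_of_le hjlt hNk
    have h2 := hz.lt_iff_lt.mp this
    rw [Fin.lt_def] at h2
    simp only [Fin.coe_castSucc, Fin.val_succ] at h2
    rw [Fin.le_def]
    omega
  rw [hstep j N hjlt hjN]
  have : ∑ i, A i * a i = A k := by
    rw [Finset.sum_eq_single k]
    · rw [hk, mul_one]
    · intro i _ hi; rw [hzero i hi, mul_zero]
    · intro h; exact absurd (Finset.mem_univ k) h
  rw [this]
  exact hAmono hjk
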